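/- Fix n ∈ ℕ and real numbers α, γ. For ε > 0 set q = −e^{−ε}, a = −e^{−ε(α+1/2)}, φ = π/2 + √ε·γ. Then as ε → 0⁺ one has a·q^n·cos(φ)/√(1+q) → (−1)^n·γ, and (1−q^n)(1−a²q^{n−1})/(4(1+q)) → n/2 if n is even and (1−q^n)(1−a²q^{n−1})/(4(1+q)) → (n+2α)/2 if n is odd. -/

import Mathlib

open Filter Topology Real

/-! With `q = -e^{-ε}` every factor `1 - q^n`, `1 + q`, `1 - a²q^{n-1}` equals `1 - e^{-εc}` or
`1 + e^{-εc}` for some `c`, according to the parity of `n`. The first kind is `~ εc` and the second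
tends to `2`, so both coefficients reduce to the first-order expansion of `exp` at `0`; in the first
one moreover `cos φ = -sin (√ε γ) ~ -√ε γ` cancels against `√(1 + q) ~ √ε`. -/

lemma tendsto_one_sub_exp_neg_mul_div (c : ℝ) :
    Tendsto (fun x : ℝ => (1 - exp (-(x * c))) / x) (𝓝[≠] 0) (𝓝 c) := by
  have hderiv : HasDerivAt (fun x : ℝ => 1 - exp (-(x * c))) c 0 := by
    simpa using ((((hasDerivAt_id (0 : ℝ)).mul_const c).neg).exp).const_sub 1
  simpa [div_eq_inv_mul] using hderiv.tendsto_slope_zero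

lemma tendsto_one_sub_exp_neg_mul_div_one_sub_exp_neg (c : ℝ) :
    Tendsto (fun x : ℝ => (1 - exp (-(x * c))) / (1 - exp (-x))) (𝓝[≠] 0) (𝓝 c) := by
  have h := (tendsto_one_sub_exp_neg_mul_div c).div (tendsto_one_sub_exp_neg_mul_div 1) one_ne_zero
  simp only [mul_one, div_one] at h
  refine h.congr' ?_
  filter_upwards [self_mem_nhdsWithin] with x hx
  exact div_div_div_cancel_right₀ hx _ _

lemma tendsto_exp_neg_mul (c : ℝ) : Tendsto (fun x : ℝ => exp (-(x * c))) (𝓝 0) (𝓝 1) := by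
  simpa using ((continuous_id.mul continuous_const).neg.rexp.tendsto (0 : ℝ))

lemma tendsto_sin_mul_div (c : ℝ) : Tendsto (fun x : ℝ => sin (x * c) / x) (𝓝[≠] 0) (𝓝 c) := by
  have hderiv : HasDerivAt (fun x : ℝ => sin (x * c)) c 0 := by
    simpa using ((hasDerivAt_id (0 : ℝ)).mul_const c).sin
  simpa [div_eq_inv_mul] using hderiv.tendsto_slope_zero

lemma tendsto_sqrt_nhdsGT_zero : Tendsto (√·) (𝓝[>] 0) (𝓝[>] 0) :=
  tendsto_nhdsWithin_of_tendsto_nhds_of_eventually_within _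
    (by simpa using (continuous_sqrt.tendsto 0).mono_left nhdsWithin_le_nhds)
    (eventually_nhdsWithin_of_forall fun _ hx => sqrt_pos.mpr hx)

lemma tendsto_sin_sqrt_mul_div_sqrt_one_sub_exp_neg (c : ℝ) :
    Tendsto (fun x : ℝ => sin (√x * c) / √(1 - exp (-x))) (𝓝[>] 0) (𝓝 c) := by
  have hsin := (tendsto_sin_mul_div c).comp
    (tendsto_sqrt_nhdsGT_zero.mono_right (nhdsGT_le_nhdsNE 0))
  have hsqrt := ((tendsto_one_sub_exp_neg_mul_div 1).mono_left (nhdsGT_le_nhdsNE 0)).sqrt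
  simp only [mul_one, sqrt_one] at hsqrt
  have h := hsin.div hsqrt one_ne_zero
  rw [div_one] at h
  refine h.congr' ?_
  filter_upwards [self_mem_nhdsWithin] with x (hx : 0 < x)
  rw [Pi.div_apply, Function.comp_apply, sqrt_div' _ hx.le,
    div_div_div_cancel_right₀ (sqrt_pos.mpr hx).ne']

lemma neg_exp_neg_pow (x : ℝ) (n : ℕ) : (-exp (-x)) ^ n = (-1) ^ n * exp (-(x * n)) := by
  rw [neg_pow, ← exp_nat_mul]
  ring_nf

/-- The truncated `n - 1` is harmless at `n = 0`, where both sides vanish. -/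
lemma one_sub_pow_mul_one_sub_sq_mul_pow_pred (x α : ℝ) (n : ℕ) :
    (1 - (-exp (-x)) ^ n) * (1 - (-exp (-(x * (α + 1 / 2)))) ^ 2 * (-exp (-x)) ^ (n - 1)) =
      (1 - (-1) ^ n * exp (-(x * n))) * (1 + (-1) ^ n * exp (-(x * (n + 2 * α)))) := by
  rcases n with _ | m
  · simp
  · have hexp : exp (-(x * (α + 1 / 2) * 2)) * exp (-(x * m)) = exp (-(x * (m + 1 + 2 * α))) := by
      rw [← exp_add]; ring_nf
    simp only [Nat.add_sub_cancel, neg_exp_neg_pow]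
    push_cast
    linear_combination (1 - (-1) ^ (m + 1) * exp (-(x * (m + 1)))) * (-1) ^ (m + 1) * hexp

lemma tendsto_one_sub_exp_mul_one_add_exp_div (c d : ℝ) :
    Tendsto (fun x : ℝ => (1 - exp (-(x * c))) * (1 + exp (-(x * d))) / (4 * (1 - exp (-x))))
      (𝓝[≠] 0) (𝓝 (c / 2)) := by
  have h := (tendsto_one_sub_exp_neg_mul_div_one_sub_exp_neg c).mul
    (((tendsto_exp_neg_mul d).mono_left nhdsWithin_le_nhds).const_add 1 |>.div_const 4)
  rw [show c * ((1 + 1) / 4) = c / 2 by ring] at h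
  refine h.congr fun x => ?_
  rw [mul_comm 4, mul_div_mul_comm]

theorem qMeixnerPollaczek_to_M1MeixnerPollaczek_limit (n : ℕ) (α γ : ℝ) :
    Tendsto (fun ε : ℝ =>
        let q := -Real.exp (-ε);
        let a := -Real.exp (-(ε * (α + 1 / 2)));
        let φ := Real.pi / 2 + Real.sqrt ε * γ;
        a * q ^ n * Real.cos φ / Real.sqrt (1 + q))
      (nhdsWithin 0 (Set.Ioi 0)) (nhds ((-1 : ℝ) ^ n * γ)) ∧
    Tendsto (fun ε : ℝ =>
        let q := -Real.exp (-ε);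
        let a := -Real.exp (-(ε * (α + 1 / 2)));
        (1 - q ^ n) * (1 - a ^ 2 * q ^ (n - 1)) / (4 * (1 + q)))
      (nhdsWithin 0 (Set.Ioi 0))
      (nhds (if Even n then (n : ℝ) / 2 else ((n : ℝ) + 2 * α) / 2)) := by
  constructor
  · have h := (((tendsto_exp_neg_mul (α + 1 / 2 + n)).mono_left nhdsWithin_le_nhds).const_mul
      ((-1 : ℝ) ^ n)).mul (tendsto_sin_sqrt_mul_div_sqrt_one_sub_exp_neg γ)
    rw [mul_one] at h
    refine h.congr fun x => ?_
    simp only [neg_exp_neg_pow, add_comm (π / 2), cos_add_pi_div_two, ← sub_eq_add_neg]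
    rw [show -(x * (α + 1 / 2 + n)) = -(x * (α + 1 / 2)) + -(x * n) by ring, exp_add]
    ring
  · simp only [one_sub_pow_mul_one_sub_sq_mul_pow_pred]
    rcases Nat.even_or_odd n with hn | hn
    · simp only [hn.neg_one_pow, if_pos hn, one_mul, ← sub_eq_add_neg]
      exact (tendsto_one_sub_exp_mul_one_add_exp_div n (n + 2 * α)).mono_left (nhdsGT_le_nhdsNE 0)
    · simp only [hn.neg_one_pow, if_neg (Nat.not_even_iff_odd.mpr hn), neg_one_mul, sub_neg_eq_add,
        ← sub_eq_add_neg]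
      exact ((tendsto_one_sub_exp_mul_one_add_exp_div (n + 2 * α) n).mono_left
        (nhdsGT_le_nhdsNE 0)).congr fun x => by rw [mul_comm (1 - _)]
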